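/- Define τ_C(n) as the minimum of 1 + |N| over all representations n = (2^r − 1) − Σ_{j∈N}(2^j − 1) with r a positive integer and N a finite multiset of positive integers, and τ_P(n) as the minimum number of parts in a representation of n as a sum of numbers of the form 2^d − 1. Then τ_C(n) = τ_P(f(n)) and τ_P(n) = τ_C(f(n)), where f is the dual function: f(n) = n if n = 2^k − 1, else f(n) = 3·2^⌊log₂ n⌋ − n − 2. -/

import Mathlib

/-!
Write `ν d = 2 ^ d - 1`. The greedy ABP, which repeatedly subtracts the largest `ν D ≤ x`, is
optimal: if an ABP of `x` has no part `D`, the part `D` can be rebuilt from two parts `D - 1` and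
a unit (by induction on `D`) without increasing the number of parts.

A CABP of `n` with leading part `r` is an ABP of `ν r - n`. For `ν L < n < ν (L + 1)` the leading
part `L + 1` is optimal, and its remainder `a = ν (L + 1) - n ≤ ν L` is exactly what the greedy
algorithm leaves of the dual `f n = ν L + a` after its first part `L`. Since `n ↦ ν L + ν (L + 1) - n`
is an involution of `(ν L, ν (L + 1))`, both identities follow; Mersenne numbers are self-dual
with `τ_C = τ_P = 1`.
-/

def nu (d : ℕ) : ℕ := 2 ^ d - 1

def IsABP (n : ℕ) (P : Multiset ℕ) : Prop :=
  (∀ i ∈ P, 1 ≤ i) ∧ (P.map nu).sum = n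

noncomputable def tauP (n : ℕ) : ℕ :=
  sInf {k | ∃ P : Multiset ℕ, IsABP n P ∧ P.card = k}

def IsSABP (n : ℕ) (P N : Multiset ℕ) : Prop :=
  (∀ i ∈ P, 1 ≤ i) ∧ (∀ j ∈ N, 1 ≤ j) ∧
    (n : ℤ) = ((P.map nu).sum : ℤ) - ((N.map nu).sum : ℤ)

noncomputable def tau (n : ℕ) : ℕ :=
  sInf {k | ∃ P N : Multiset ℕ, IsSABP n P N ∧ P.card + N.card = k}

noncomputable def tauC (n : ℕ) : ℕ :=
  sInf {k | ∃ (r : ℕ) (N : Multiset ℕ), IsSABP n {r} N ∧ 1 + N.card = k}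

def greedy : ℕ → Multiset ℕ
  | 0 => 0
  | (n+1) => Nat.log 2 (n+2) ::ₘ greedy (n + 1 - nu (Nat.log 2 (n+2)))
  decreasing_by
    have h1 : 0 < Nat.log 2 (n+2) := Nat.log_pos one_lt_two (by omega)
    have h2 : 2 ^ 1 ≤ 2 ^ Nat.log 2 (n+2) := Nat.pow_le_pow_right (by norm_num) h1
    simp only [nu] at *
    omega

open Classical in
noncomputable def dualf (n : ℕ) : ℕ :=
  if ∃ k : ℕ, 1 ≤ k ∧ n = 2 ^ k - 1 then n else 3 * 2 ^ Nat.log 2 n - n - 2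

def parentT (v : ℕ × ℕ) : ℕ × ℕ := (v.1 + 1, v.2 / 2)

def levelT (v : ℕ × ℕ) : ℕ := v.1 + 1

def treeGraph : SimpleGraph (ℕ × ℕ) where
  Adj u v := parentT u = v ∨ parentT v = u
  symm := ⟨fun u v h => by tauto⟩
  loopless := ⟨fun v h => by simp [parentT, Prod.ext_iff] at h⟩

noncomputable def cutCard (S : Finset (ℕ × ℕ)) : ℕ :=
  Set.ncard {v : ℕ × ℕ | ¬ ((v ∈ S) ↔ (parentT v ∈ S))}

def leafCount (S : Finset (ℕ × ℕ)) : ℕ := (S.filter (fun v => v.1 = 0)).card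

def completeSubtree (v : ℕ × ℕ) : Finset (ℕ × ℕ) :=
  (Finset.range (v.1 + 1)).biUnion (fun a =>
    (Finset.Ico (v.2 * 2 ^ (v.1 - a)) ((v.2 + 1) * 2 ^ (v.1 - a))).image (fun i => (a, i)))

def Bd (d : ℕ) : Finset (ℕ × ℕ) := completeSubtree (d - 1, 0)

def cutBd (d : ℕ) (X : Finset (ℕ × ℕ)) : ℕ :=
  ((Bd d).filter (fun v => v.1 + 1 < d ∧ ¬((v ∈ X) ↔ parentT v ∈ X))).card

noncomputable def deltaB (d i : ℕ) : ℕ :=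
  sInf {c | ∃ X ⊆ Bd d, X.card = i ∧ cutBd d X = c}

noncomputable def tauC0 (n : ℕ) : ℕ := if n = 0 then 0 else tauC n

def fS (S : Finset (ℕ × ℕ)) (v : ℕ × ℕ) : ℤ :=
  if v ∈ S ∧ parentT v ∉ S then 2 ^ levelT v - 1
  else if v ∉ S ∧ parentT v ∈ S then -(2 ^ levelT v - 1)
  else 0

lemma nu_zero : nu 0 = 0 := rfl

lemma nu_succ (d : ℕ) : nu (d + 1) = 2 * nu d + 1 := by
  have := Nat.one_le_two_pow (n := d)
  simp only [nu, pow_succ]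
  omega

lemma nu_strictMono : StrictMono nu :=
  strictMono_nat_of_lt_succ fun d => by rw [nu_succ]; omega

lemma pos_of_nu_pos {d : ℕ} (h : 0 < nu d) : 0 < d :=
  nu_strictMono.lt_iff_lt.1 (by rwa [nu_zero])

lemma le_nu_self (d : ℕ) : d ≤ nu d := by
  have := Nat.lt_two_pow_self (n := d)
  unfold nu
  omega

lemma isABP_zero : IsABP 0 0 := ⟨by simp, by simp⟩

lemma isABP_cons_iff {x d : ℕ} {P : Multiset ℕ} :
    IsABP x (d ::ₘ P) ↔ 1 ≤ d ∧ nu d ≤ x ∧ IsABP (x - nu d) P := by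
  simp only [IsABP, Multiset.forall_mem_cons, Multiset.map_cons, Multiset.sum_cons]
  constructor
  · rintro ⟨⟨hd, hP⟩, hx⟩
    exact ⟨hd, by omega, hP, by omega⟩
  · rintro ⟨hd, hx, hP, hs⟩
    exact ⟨⟨hd, hP⟩, by omega⟩

lemma IsABP.cons {x d : ℕ} {P : Multiset ℕ} (hd : 1 ≤ d) (h : IsABP x P) :
    IsABP (nu d + x) (d ::ₘ P) :=
  isABP_cons_iff.2 ⟨hd, by omega, by simpa using h⟩

lemma IsABP.nu_le_of_mem {x i : ℕ} {P : Multiset ℕ} (h : IsABP x P) (hi : i ∈ P) : nu i ≤ x :=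
  h.2 ▸ Multiset.le_sum_of_mem (Multiset.mem_map_of_mem nu hi)

lemma IsABP.le_of_mem {x i : ℕ} {P : Multiset ℕ} (h : IsABP x P) (hi : i ∈ P) : i ≤ x :=
  (le_nu_self i).trans (h.nu_le_of_mem hi)

lemma IsABP.ne_zero {x : ℕ} {P : Multiset ℕ} (h : IsABP x P) (hx : x ≠ 0) : P ≠ 0 := by
  rintro rfl
  exact hx (by simpa [IsABP] using h.2.symm)

/-- Drop a part `1`, or split a part `j + 1` into two parts `j`, since `ν (j + 1) = 2 ν j + 1`. -/
lemma exists_isABP_of_isABP_succ {x d : ℕ} {P : Multiset ℕ} (h : IsABP (x + 1) P)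
    (hP : ∀ i ∈ P, i ≤ d) :
    ∃ A, IsABP x A ∧ (∀ i ∈ A, i ≤ d) ∧ A.card ≤ P.card + 1 := by
  obtain ⟨j, hj⟩ := Multiset.exists_mem_of_ne_zero (h.ne_zero (by omega))
  obtain ⟨P', rfl⟩ := Multiset.exists_cons_of_mem hj
  obtain ⟨hj1, hjx, hP'⟩ := isABP_cons_iff.1 h
  simp only [Multiset.forall_mem_cons] at hP
  rcases j with _ | i
  · omega
  rcases Nat.eq_zero_or_pos i with rfl | hi
  · exact ⟨P', by simpa [nu] using hP', hP.2, by simp; omega⟩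
  · refine ⟨i ::ₘ i ::ₘ P', ?_, ?_, by simp⟩
    · have := (hP'.cons hi).cons hi
      rwa [show nu i + (nu i + (x + 1 - nu (i + 1))) = x by rw [nu_succ] at hjx ⊢; omega] at this
    · simp only [Multiset.forall_mem_cons]
      exact ⟨by omega, by omega, hP.2⟩

lemma exists_isABP_sub_nu_of_mem {x d : ℕ} {P : Multiset ℕ} (h : IsABP x P)
    (hP : ∀ i ∈ P, i ≤ d) (hdP : d ∈ P) :
    ∃ A, IsABP (x - nu d) A ∧ (∀ i ∈ A, i ≤ d) ∧ A.card < P.card := by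
  obtain ⟨P', rfl⟩ := Multiset.exists_cons_of_mem hdP
  exact ⟨P', (isABP_cons_iff.1 h).2.2, fun i hi => hP i (Multiset.mem_cons_of_mem hi), by simp⟩

/-- If no part equals `d + 1`, the part `d + 1` is assembled from two parts `d` (peeled off by
induction) and one unit, since `ν (d + 1) = 2 ν d + 1`. -/
lemma exists_isABP_sub_nu {d : ℕ} (hd : 1 ≤ d) {x : ℕ} {P : Multiset ℕ} (h : IsABP x P)
    (hP : ∀ i ∈ P, i ≤ d) (hx : nu d ≤ x) :
    ∃ A, IsABP (x - nu d) A ∧ (∀ i ∈ A, i ≤ d) ∧ A.card < P.card := by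
  induction d, hd using Nat.le_induction generalizing x P with
  | base =>
    refine exists_isABP_sub_nu_of_mem h hP ?_
    obtain ⟨j, hj⟩ := Multiset.exists_mem_of_ne_zero (h.ne_zero (by simp [nu] at hx; omega))
    obtain rfl : j = 1 := le_antisymm (hP j hj) (h.1 j hj)
    exact hj
  | succ d hd ih =>
    by_cases hdP : d + 1 ∈ P
    · exact exists_isABP_sub_nu_of_mem h hP hdP
    have hP' : ∀ i ∈ P, i ≤ d := fun i hi => by
      have := hP i hi
      have : i ≠ d + 1 := fun h => hdP (h ▸ hi)
      omega
    rw [nu_succ] at hx ⊢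
    obtain ⟨A₁, hA₁, hA₁d, hA₁P⟩ := ih h hP' (by omega)
    obtain ⟨A₂, hA₂, hA₂d, hA₂A₁⟩ := ih hA₁ hA₁d (by omega)
    rw [show x - nu d - nu d = x - (2 * nu d + 1) + 1 by omega] at hA₂
    obtain ⟨A, hA, hAd, hAA₂⟩ := exists_isABP_of_isABP_succ hA₂ hA₂d
    exact ⟨A, hA, fun i hi => (hAd i hi).trans d.le_succ, by omega⟩

lemma tauP_le {x : ℕ} {P : Multiset ℕ} (h : IsABP x P) : tauP x ≤ P.card :=
  Nat.sInf_le ⟨P, h, rfl⟩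

lemma exists_isABP_card_eq_tauP (x : ℕ) : ∃ P, IsABP x P ∧ P.card = tauP x := by
  have hones : IsABP x (Multiset.replicate x 1) :=
    ⟨fun i hi => (Multiset.eq_of_mem_replicate hi).ge, by simp [Multiset.map_replicate, nu]⟩
  exact Nat.sInf_mem (s := {k | ∃ P, IsABP x P ∧ P.card = k}) ⟨_, _, hones, rfl⟩

lemma tauP_zero : tauP 0 = 0 :=
  Nat.le_zero.1 (tauP_le isABP_zero)

lemma tauP_le_tauP_succ_add_one (x : ℕ) : tauP x ≤ tauP (x + 1) + 1 := by
  obtain ⟨P, hP, hPcard⟩ := exists_isABP_card_eq_tauP (x + 1)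
  obtain ⟨A, hA, -, hAcard⟩ := exists_isABP_of_isABP_succ hP fun _ => hP.le_of_mem
  exact (tauP_le hA).trans (hPcard ▸ hAcard)

lemma exists_nu_le_lt_nu_succ (x : ℕ) : ∃ D, nu D ≤ x ∧ x < nu (D + 1) := by
  refine ⟨Nat.log 2 (x + 1), ?_, ?_⟩
  · have := Nat.pow_log_le_self 2 (x.add_one_ne_zero)
    unfold nu
    omega
  · have := Nat.lt_pow_succ_log_self one_lt_two (x + 1)
    unfold nu
    omega

lemma tauP_eq_tauP_sub_nu_add_one {x D : ℕ} (hD : 1 ≤ D) (h₁ : nu D ≤ x) (h₂ : x < nu (D + 1)) :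
    tauP x = tauP (x - nu D) + 1 := by
  apply le_antisymm
  · obtain ⟨A, hA, hAcard⟩ := exists_isABP_card_eq_tauP (x - nu D)
    have := tauP_le (hA.cons hD)
    rwa [Nat.add_sub_cancel' h₁, Multiset.card_cons, hAcard] at this
  · obtain ⟨P, hP, hPcard⟩ := exists_isABP_card_eq_tauP x
    have hPD : ∀ i ∈ P, i ≤ D := fun i hi =>
      Nat.lt_succ_iff.1 (nu_strictMono.lt_iff_lt.1 ((hP.nu_le_of_mem hi).trans_lt h₂))
    obtain ⟨A, hA, -, hAcard⟩ := exists_isABP_sub_nu hD hP hPD h₁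
    have := tauP_le hA
    omega

lemma tauP_nu {k : ℕ} (hk : 1 ≤ k) : tauP (nu k) = 1 := by
  rw [tauP_eq_tauP_sub_nu_add_one hk le_rfl (nu_strictMono k.lt_succ_self), Nat.sub_self,
    tauP_zero]

lemma tauP_pos {x : ℕ} (hx : 1 ≤ x) : 0 < tauP x := by
  obtain ⟨D, h₁, h₂⟩ := exists_nu_le_lt_nu_succ x
  have hD : 1 ≤ D := by
    by_contra! hD0
    simp [Nat.lt_one_iff.1 hD0, nu] at h₂
    omega
  rw [tauP_eq_tauP_sub_nu_add_one hD h₁ h₂]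
  omega

/-- Raising the leading part of a CABP from `L + 1` to `r` never helps: greedily peeling `ν r`
off `a + ν (r + 1) - ν (L + 1)` leaves `(a + 1) + ν r - ν (L + 1)`. -/
lemma tauP_le_tauP_add_nu_sub_nu {L r : ℕ} (hr : L + 1 ≤ r) {a : ℕ} (ha₁ : 1 ≤ a)
    (ha₂ : a ≤ nu L) : tauP a ≤ tauP (a + (nu r - nu (L + 1))) := by
  induction r, hr using Nat.le_induction generalizing a with
  | base => simp
  | succ r hr ih =>
    have hLr := nu_strictMono.monotone hr
    have hL := nu_succ L
    have hr' := nu_succ r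
    rcases ha₂.eq_or_lt with rfl | ha₂
    · rw [tauP_nu (pos_of_nu_pos ha₁)]
      exact tauP_pos (by omega)
    have hstep := tauP_eq_tauP_sub_nu_add_one (x := a + (nu (r + 1) - nu (L + 1))) (D := r)
      (by omega) (by omega) (by omega)
    rw [show a + (nu (r + 1) - nu (L + 1)) - nu r = a + 1 + (nu r - nu (L + 1)) by omega] at hstep
    have := ih (a := a + 1) (by omega) ha₂
    have := tauP_le_tauP_succ_add_one a
    omega

lemma isSABP_singleton_iff {n r : ℕ} {N : Multiset ℕ} :
    IsSABP n {r} N ↔ 1 ≤ r ∧ n ≤ nu r ∧ IsABP (nu r - n) N := by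
  simp only [IsSABP, IsABP, Multiset.mem_singleton, forall_eq, Multiset.map_singleton,
    Multiset.sum_singleton]
  constructor
  · rintro ⟨hr, hN, hn⟩
    exact ⟨hr, by omega, hN, by omega⟩
  · rintro ⟨hr, hn, hN, hs⟩
    exact ⟨hr, hN, by omega⟩

lemma tauC_le {n r : ℕ} (hr : 1 ≤ r) (hn : n ≤ nu r) : tauC n ≤ tauP (nu r - n) + 1 := by
  obtain ⟨N, hN, hNcard⟩ := exists_isABP_card_eq_tauP (nu r - n)
  exact Nat.sInf_le ⟨r, N, isSABP_singleton_iff.2 ⟨hr, hn, hN⟩, by omega⟩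

lemma exists_tauC_eq (n : ℕ) : ∃ r, 1 ≤ r ∧ n ≤ nu r ∧ tauC n = tauP (nu r - n) + 1 := by
  have hne : {k | ∃ (r : ℕ) (N : Multiset ℕ), IsSABP n {r} N ∧ 1 + N.card = k}.Nonempty := by
    obtain ⟨N, hN, -⟩ := exists_isABP_card_eq_tauP (nu (n + 1) - n)
    exact ⟨_, n + 1, N, isSABP_singleton_iff.2 ⟨by omega, (le_nu_self _).trans' n.le_succ, hN⟩, rfl⟩
  obtain ⟨r, N, hS, hcard⟩ := Nat.sInf_mem hne
  obtain ⟨hr, hn, hN⟩ := isSABP_singleton_iff.1 hS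
  refine ⟨r, hr, hn, le_antisymm (tauC_le hr hn) ?_⟩
  calc tauP (nu r - n) + 1 ≤ N.card + 1 := by have := tauP_le hN; omega
    _ = tauC n := by rw [tauC, ← hcard, add_comm]

lemma tauC_nu {k : ℕ} (hk : 1 ≤ k) : tauC (nu k) = 1 := by
  obtain ⟨r, -, -, h⟩ := exists_tauC_eq (nu k)
  have := tauC_le hk le_rfl
  rw [Nat.sub_self, tauP_zero] at this
  omega

lemma tauC_eq_tauP_nu_add_nu_sub {L n : ℕ} (h₁ : nu L < n) (h₂ : n < nu (L + 1)) :
    tauC n = tauP (nu L + nu (L + 1) - n) := by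
  have hL := nu_succ L
  have hL₁ : 1 ≤ L := Nat.one_le_iff_ne_zero.2 fun h => by subst h; simp [nu] at h₂; omega
  rw [tauP_eq_tauP_sub_nu_add_one hL₁ (by omega) (by omega),
    show nu L + nu (L + 1) - n - nu L = nu (L + 1) - n by omega]
  obtain ⟨r, -, hr, hC⟩ := exists_tauC_eq n
  have hLr : L + 1 ≤ r := nu_strictMono.lt_iff_lt.1 (h₁.trans_le hr)
  have hmono := tauP_le_tauP_add_nu_sub_nu hLr (a := nu (L + 1) - n) (by omega) (by omega)
  have hrL := nu_strictMono.monotone hLr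
  rw [show nu (L + 1) - n + (nu r - nu (L + 1)) = nu r - n by omega] at hmono
  have := tauC_le (r := L + 1) (n := n) (by omega) h₂.le
  omega

lemma dualf_nu {k : ℕ} (hk : 1 ≤ k) : dualf (nu k) = nu k :=
  if_pos ⟨k, hk, rfl⟩

lemma dualf_eq_of_nu_lt_of_lt_nu {L n : ℕ} (h₁ : nu L < n) (h₂ : n < nu (L + 1)) :
    dualf n = nu L + nu (L + 1) - n := by
  have hnot : ¬ ∃ k : ℕ, 1 ≤ k ∧ n = 2 ^ k - 1 := by
    rintro ⟨k, -, rfl⟩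
    have hLk := nu_strictMono.lt_iff_lt.1 h₁
    have hkL := nu_strictMono.lt_iff_lt.1 h₂
    omega
  have hlog : Nat.log 2 n = L := by
    unfold nu at h₁ h₂
    exact Nat.log_eq_of_pow_le_of_lt_pow (by omega) (by omega)
  have := Nat.one_le_two_pow (n := L)
  rw [dualf, if_neg hnot, hlog, nu_succ]
  unfold nu
  omega

theorem stmt8 (n : ℕ) (hn : 1 ≤ n) :
    tauC n = tauP (dualf n) ∧ tauP n = tauC (dualf n) := by
  obtain ⟨L, h₁, h₂⟩ := exists_nu_le_lt_nu_succ n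
  rcases h₁.eq_or_lt with rfl | h₁
  · have hL := pos_of_nu_pos hn
    rw [dualf_nu hL, tauC_nu hL, tauP_nu hL]
    exact ⟨rfl, rfl⟩
  · have hL := nu_succ L
    rw [dualf_eq_of_nu_lt_of_lt_nu h₁ h₂]
    refine ⟨tauC_eq_tauP_nu_add_nu_sub h₁ h₂, ?_⟩
    have h := tauC_eq_tauP_nu_add_nu_sub (L := L) (n := nu L + nu (L + 1) - n) (by omega) (by omega)
    rwa [Nat.sub_sub_self (by omega), eq_comm] at h
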